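/- Lemma 3.2: Fix a profile (f_1,…,f_n) of piecewise constant value density functions on [0,1]. Every weakly MNW allocation A of the cake [0,1] satisfies v_1(A_1) ≤ w, where w is the common value received by agent 1 in MNW allocations with respect to (f_1,…,f_n); moreover this bound is attained, since every MNW allocation is weakly MNW. In other words, the maximum value that agent 1 receives among all weakly MNW allocations equals the value agent 1 receives in an MNW allocation. -/

import Mathlib

open MeasureTheory Set

noncomputable def cakeval (f : ℝ → ℝ) (S : Set ℝ) : ℝ := ∫ x in S, f x

def PiecewiseConstant (f : ℝ → ℝ) : Prop :=
  ∃ (m : ℕ) (a : Fin (m + 1) → ℝ) (c : Fin m → ℝ),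
    a 0 = 0 ∧ a (Fin.last m) = 1 ∧ Monotone a ∧
    ∀ t : Fin m, ∀ x ∈ Set.Ico (a t.castSucc) (a t.succ), f x = c t

def ValidDensity (f : ℝ → ℝ) : Prop :=
  PiecewiseConstant f ∧ (∀ x, 0 ≤ f x) ∧ 0 < cakeval f (Set.Icc 0 1)

def FinUnionIcc (S : Set ℝ) : Prop :=
  ∃ (k : ℕ) (a b : Fin k → ℝ), S = ⋃ j, Set.Icc (a j) (b j)

def IsAllocOn {n : ℕ} (C : Set ℝ) (A : Fin n → Set ℝ) : Prop :=
  (∀ i, A i ⊆ C) ∧ (∀ i, FinUnionIcc (A i)) ∧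
    Pairwise fun i j => volume (A i ∩ A j) = 0

def IsAlloc {n : ℕ} (A : Fin n → Set ℝ) : Prop := IsAllocOn (Set.Icc 0 1) A

def CompleteAlloc {n : ℕ} (A : Fin n → Set ℝ) : Prop := (⋃ i, A i) = Set.Icc (0 : ℝ) 1

noncomputable def nashProd {n : ℕ} (f : Fin n → ℝ → ℝ) (A : Fin n → Set ℝ) : ℝ :=
  ∏ i, cakeval (f i) (A i)

def IsMNWOn {n : ℕ} (C : Set ℝ) (f : Fin n → ℝ → ℝ) (A : Fin n → Set ℝ) : Prop :=
  IsAllocOn C A ∧ ∀ B : Fin n → Set ℝ, IsAllocOn C B → nashProd f B ≤ nashProd f A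

def IsMNW {n : ℕ} (f : Fin n → ℝ → ℝ) (A : Fin n → Set ℝ) : Prop :=
  IsMNWOn (Set.Icc 0 1) f A

def IsCompleteMNW {n : ℕ} (f : Fin n → ℝ → ℝ) (A : Fin n → Set ℝ) : Prop :=
  IsAlloc A ∧ CompleteAlloc A ∧
    ∀ B : Fin n → Set ℝ, IsAlloc B → CompleteAlloc B → nashProd f B ≤ nashProd f A

/-- A system of partition points `a 0 = 0 ≤ a 1 ≤ … ≤ a m = 1` of the cake `[0,1]`. -/
def IsPartitionPts (m : ℕ) (a : Fin (m + 1) → ℝ) : Prop :=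
  a 0 = 0 ∧ a (Fin.last m) = 1 ∧ Monotone a

/-- The `t`-th cell of the partition given by the points `a`. -/
def cell {m : ℕ} (a : Fin (m + 1) → ℝ) (t : Fin m) : Set ℝ :=
  Set.Ico (a t.castSucc) (a t.succ)

/-- All the densities `f i` are constant on each cell of the partition, with
constant value `F i t` on cell `t`. -/
def ConstOnCells {n m : ℕ} (f : Fin n → ℝ → ℝ) (a : Fin (m + 1) → ℝ)
    (F : Fin n → Fin m → ℝ) : Prop :=
  ∀ i t, ∀ x ∈ cell a t, f i x = F i t

/-- Weakly MNW allocation on the cake `C`: every agent gets positive value, and for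
every cell `X_t` and every agent `i` whose piece meets `X_t` in positive measure,
`f_i(X_t)/v_i(A_i) ≥ f_j(X_t)/v_j(A_j)` for every agent `j` other than agent 1
(agent 1 being index `0`). -/
def WeaklyMNWOn {n m : ℕ} (C : Set ℝ) (f : Fin (n + 1) → ℝ → ℝ) (a : Fin (m + 1) → ℝ)
    (F : Fin (n + 1) → Fin m → ℝ) (A : Fin (n + 1) → Set ℝ) : Prop :=
  IsAllocOn C A ∧ (∀ i, 0 < cakeval (f i) (A i)) ∧
    ∀ (t : Fin m) (i : Fin (n + 1)), 0 < volume (A i ∩ cell a t) →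
      ∀ j : Fin (n + 1), j ≠ 0 →
        F j t / cakeval (f j) (A j) ≤ F i t / cakeval (f i) (A i)

/-!
Restricted to the cells `X_t` of the partition, an allocation is described by its share matrix
`x i t = |A_i ∩ X_t|`, values are linear in it, and every feasible share matrix is realised by an
allocation; so MNW allocations are exactly the Nash-optimal share matrices. If `y` is such an
optimum with values `w`, moving a little of a cell `X_t` from an agent `i` holding it to another
agent `j` shows `f_j(X_t)/w_j ≤ f_i(X_t)/w_i`; hence `y` is weakly MNW.

Conversely, let `x` be weakly MNW with values `u`, and suppose `u_1 > w_1`. Call an agent `k`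
rich if `u_k/w_k ≥ u_1/w_1`; agent 1 is rich. Chaining the two optimality conditions shows that
no rich agent holds under `x` a cell that a poor agent values and holds under `y`. So the rich
agents may keep their `x`-shares while the poor agents keep their `y`-shares in the cells the
rich leave untouched; this is feasible, gives each agent `k` at least `w_k` and agent 1 more,
contradicting the optimality of `y`.
-/

section Shares

variable {ι κ : Type*} [Fintype κ]

def shareValue (F y : ι → κ → ℝ) (i : ι) : ℝ := ∑ t, F i t * y i t

def FeasibleShares [Fintype ι] (ℓ : κ → ℝ) (y : ι → κ → ℝ) : Prop :=
  (∀ i t, 0 ≤ y i t) ∧ ∀ t, ∑ i, y i t ≤ ℓ t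

def IsNashOptimalShares [Fintype ι] (F : ι → κ → ℝ) (ℓ : κ → ℝ) (y : ι → κ → ℝ) :
    Prop :=
  FeasibleShares ℓ y ∧
    ∀ z, FeasibleShares ℓ z → ∏ i, shareValue F z i ≤ ∏ i, shareValue F y i

def SatisfiesMNWCondition (F x : ι → κ → ℝ) (J : Set ι) : Prop :=
  ∀ i t, 0 < x i t → ∀ j ∈ J, F j t * shareValue F x i ≤ F i t * shareValue F x j

variable {F : ι → κ → ℝ} {ℓ : κ → ℝ}

lemma SatisfiesMNWCondition.mono {x : ι → κ → ℝ} {J J' : Set ι}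
    (h : SatisfiesMNWCondition F x J') (hJ : J ⊆ J') : SatisfiesMNWCondition F x J :=
  fun i t hit j hj => h i t hit j (hJ hj)

lemma shareValue_nonneg (hF : 0 ≤ F) {y : ι → κ → ℝ} (hy : ∀ i t, 0 ≤ y i t) (i : ι) :
    0 ≤ shareValue F y i :=
  Finset.sum_nonneg fun t _ => mul_nonneg (hF i t) (hy i t)

lemma IsNashOptimalShares.shareValue_pos [Fintype ι] (hF : 0 ≤ F) (hℓ : 0 ≤ ℓ)
    (htotal : ∀ i, 0 < ∑ t, F i t * ℓ t) {y : ι → κ → ℝ}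
    (hy : IsNashOptimalShares F ℓ y) (i : ι) : 0 < shareValue F y i := by
  have hcard : (0 : ℝ) < Fintype.card ι := Nat.cast_pos.mpr (Fintype.card_pos_iff.mpr ⟨i⟩)
  let z : ι → κ → ℝ := fun _ t => ℓ t / Fintype.card ι
  have hz : FeasibleShares ℓ z := by
    refine ⟨fun _ t => div_nonneg (hℓ t) hcard.le, fun t => le_of_eq ?_⟩
    simp only [z, Finset.sum_const, Finset.card_univ, nsmul_eq_mul]
    field_simp
  have hz_pos : 0 < ∏ k, shareValue F z k := Finset.prod_pos fun k _ => by
    simp only [shareValue, z, ← mul_div_assoc, ← Finset.sum_div]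
    exact div_pos (htotal k) hcard
  have hy_ne : ∏ k, shareValue F y k ≠ 0 := (hz_pos.trans_le (hy.2 z hz)).ne'
  exact (shareValue_nonneg hF hy.1.1 i).lt_of_ne
    (Finset.prod_ne_zero_iff.mp hy_ne i (Finset.mem_univ i)).symm

lemma exists_pos_lt_sub_mul_mul_add_mul {p q a b δ : ℝ} (ha : 0 ≤ a) (hb : 0 ≤ b)
    (hδ : 0 < δ) (h : a * q < b * p) :
    ∃ ε, 0 < ε ∧ ε ≤ δ ∧ p * q < (p - a * ε) * (q + b * ε) := by
  have hab : 0 ≤ a * b := mul_nonneg ha hb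
  set ε := min δ ((b * p - a * q) / (a * b + 1))
  have hε : 0 < ε := lt_min hδ (by positivity)
  have hεc : ε * (a * b + 1) ≤ b * p - a * q :=
    (le_div_iff₀ (by positivity)).mp (min_le_right _ _)
  exact ⟨ε, hε, min_le_left _ _, by nlinarith [mul_nonneg hab hε.le]⟩

lemma prod_lt_prod_of_eq_off_pair [DecidableEq ι] [Fintype ι] {f g : ι → ℝ} {i j : ι}
    (hij : i ≠ j) (hg : ∀ k, 0 < g k) (heq : ∀ k, k ≠ i → k ≠ j → f k = g k)
    (h : g i * g j < f i * f j) : ∏ k, g k < ∏ k, f k := by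
  have hi := Finset.mem_univ i
  have hj : j ∈ Finset.univ.erase i := Finset.mem_erase.mpr ⟨hij.symm, Finset.mem_univ j⟩
  rw [← Finset.mul_prod_erase _ f hi, ← Finset.mul_prod_erase _ g hi,
    ← Finset.mul_prod_erase _ f hj, ← Finset.mul_prod_erase _ g hj, ← mul_assoc, ← mul_assoc,
    Finset.prod_congr rfl fun k hk => heq k (Finset.ne_of_mem_erase (Finset.mem_of_mem_erase hk))
      (Finset.ne_of_mem_erase hk)]
  exact mul_lt_mul_of_pos_right h (Finset.prod_pos fun k _ => hg k)

lemma IsNashOptimalShares.satisfiesMNWCondition [Fintype ι] (hF : 0 ≤ F) {y : ι → κ → ℝ}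
    (hy : IsNashOptimalShares F ℓ y) (hw : ∀ i, 0 < shareValue F y i) :
    SatisfiesMNWCondition F y Set.univ := by
  classical
  intro i t hit j _
  obtain rfl | hij := eq_or_ne i j
  · exact le_rfl
  by_contra! h
  obtain ⟨ε, hε, hεy, hgain⟩ := exists_pos_lt_sub_mul_mul_add_mul (hF i t) (hF j t) hit h
  let δ : ι → ℝ := fun k => (if k = j then ε else 0) - (if k = i then ε else 0)
  let z : ι → κ → ℝ := fun k s => y k s + if s = t then δ k else 0
  have hz_val : ∀ k, shareValue F z k = shareValue F y k + F k t * δ k := fun k => by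
    simp [shareValue, z, mul_add, Finset.sum_add_distrib]
  have hz : FeasibleShares ℓ z := by
    refine ⟨fun k s => ?_, fun s => ?_⟩
    · have := hy.1.1 k s
      simp only [z, δ]
      split_ifs <;> subst_vars <;> linarith
    · have hδ : ∑ k, δ k = 0 := by simp [δ, Finset.sum_sub_distrib]
      by_cases hs : s = t <;> simpa [z, hs, Finset.sum_add_distrib, hδ] using hy.1.2 s
  refine (hy.2 z hz).not_gt (prod_lt_prod_of_eq_off_pair hij hw (fun k hki hkj => ?_) ?_)
  · simp [hz_val, δ, hki, hkj]
  · simpa [hz_val, δ, hij, hij.symm, ← sub_eq_add_neg] using hgain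

lemma SatisfiesMNWCondition.div_le_div [Fintype ι] {x y : ι → κ → ℝ} {J : Set ι}
    (hx : SatisfiesMNWCondition F x J) (hy : SatisfiesMNWCondition F y Set.univ)
    (hw : ∀ i, 0 < shareValue F y i) {k k' : ι} {s : κ} (hk : k ∈ J)
    (hu : 0 ≤ shareValue F x k) (hxs : 0 < x k' s) (hys : 0 < y k s) (hFs : 0 < F k s) :
    shareValue F x k' / shareValue F y k' ≤ shareValue F x k / shareValue F y k := by
  rw [div_le_div_iff₀ (hw k') (hw k)]
  refine le_of_mul_le_mul_left ?_ hFs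
  calc F k s * (shareValue F x k' * shareValue F y k)
      ≤ F k' s * shareValue F x k * shareValue F y k := by
        rw [← mul_assoc]; exact mul_le_mul_of_nonneg_right (hx k' s hxs k hk) (hw k).le
    _ ≤ F k s * shareValue F y k' * shareValue F x k := by
        rw [mul_right_comm]; exact mul_le_mul_of_nonneg_right (hy k s hys k' trivial) hu
    _ = F k s * (shareValue F x k * shareValue F y k') := by ring

theorem IsNashOptimalShares.shareValue_le [Fintype ι] (hF : 0 ≤ F) {x y : ι → κ → ℝ}
    (hy : IsNashOptimalShares F ℓ y) (hw : ∀ i, 0 < shareValue F y i)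
    (hx : FeasibleShares ℓ x) {i₀ : ι} (hxc : SatisfiesMNWCondition F x {i₀}ᶜ) :
    shareValue F x i₀ ≤ shareValue F y i₀ := by
  classical
  set u := shareValue F x
  set w := shareValue F y
  by_contra! hlt
  let rich : ι → Prop := fun k => u i₀ / w i₀ ≤ u k / w k
  have hrich : ∀ k, rich k → w k < u k := fun k hk =>
    (one_lt_div (hw k)).mp (((one_lt_div (hw i₀)).mpr hlt).trans_le hk)
  have hsep : ∀ k s, ¬ rich k → F k s * y k s ≠ 0 → ∀ k', rich k' → x k' s = 0 := by
    intro k s hk hks k' hk'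
    by_contra hne
    have hki₀ : k ≠ i₀ := by rintro rfl; exact hk le_rfl
    refine hk (hk'.trans (hxc.div_le_div (hy.satisfiesMNWCondition hF hw) hw hki₀
      (shareValue_nonneg hF hx.1 k) ((hx.1 k' s).lt_of_ne' hne) ?_ ?_))
    · exact (hy.1.1 k s).lt_of_ne' (right_ne_zero_of_mul hks)
    · exact (hF k s).lt_of_ne' (left_ne_zero_of_mul hks)
  let z : ι → κ → ℝ := fun k s =>
    if rich k then x k s else if ∀ k', rich k' → x k' s = 0 then y k s else 0
  have hz : FeasibleShares ℓ z := by
    refine ⟨fun k s => ?_, fun s => ?_⟩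
    · simp only [z]; split_ifs <;> first | exact hx.1 k s | exact hy.1.1 k s | exact le_rfl
    by_cases hs : ∀ k', rich k' → x k' s = 0
    · refine le_trans (Finset.sum_le_sum fun k _ => ?_) (hy.1.2 s)
      simp only [z, if_pos hs]
      split_ifs with hk
      · exact (hs k hk).trans_le (hy.1.1 k s)
      · exact le_rfl
    · refine le_trans (Finset.sum_le_sum fun k _ => ?_) (hx.2 s)
      simp only [z, if_neg hs]
      split_ifs
      exacts [le_rfl, hx.1 k s]
  have hz_rich : ∀ k, rich k → shareValue F z k = u k := fun k hk =>
    Finset.sum_congr rfl fun s _ => by simp only [z, if_pos hk]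
  have hwz : ∀ k, w k ≤ shareValue F z k := by
    intro k
    by_cases hk : rich k
    · exact (hz_rich k hk).ge.trans' (hrich k hk).le
    refine (Finset.sum_congr rfl fun s _ => ?_).le
    simp only [z, if_neg hk]
    split_ifs with hs
    · rfl
    · rw [mul_zero]
      by_contra hks
      exact hs (hsep k s hk hks)
  refine (hy.2 z hz).not_gt (Finset.prod_lt_prod (fun k _ => hw k) (fun k _ => hwz k)
    ⟨i₀, Finset.mem_univ _, ?_⟩)
  rw [hz_rich i₀ le_rfl]
  exact hlt

end Shares

section Cells

variable {m : ℕ} {a : Fin (m + 1) → ℝ}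

def cellLength (a : Fin (m + 1) → ℝ) (t : Fin m) : ℝ := a t.succ - a t.castSucc

noncomputable def cellShares {ι : Type*} (a : Fin (m + 1) → ℝ) (A : ι → Set ℝ) (i : ι)
    (t : Fin m) : ℝ :=
  volume.real (A i ∩ cell a t)

lemma cellLength_nonneg (ha : Monotone a) (t : Fin m) : 0 ≤ cellLength a t :=
  sub_nonneg.mpr (ha (Fin.castSucc_le_succ t))

lemma volume_cell_ne_top (t : Fin m) : volume (cell a t) ≠ ⊤ := measure_Ico_lt_top.ne

lemma volume_inter_cell_ne_top (S : Set ℝ) (t : Fin m) : volume (S ∩ cell a t) ≠ ⊤ :=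
  measure_ne_top_of_subset inter_subset_right (volume_cell_ne_top t)

lemma volume_real_cell (ha : Monotone a) (t : Fin m) :
    volume.real (cell a t) = cellLength a t :=
  Real.volume_real_Ico_of_le (ha (Fin.castSucc_le_succ t))

lemma pairwise_disjoint_cell (ha : Monotone a) : Pairwise (Function.onFun Disjoint (cell a)) := by
  have key : ∀ s t : Fin m, s < t → Disjoint (cell a s) (cell a t) := fun s t hst =>
    Ico_disjoint_Ico_same.mono_right
      (Ico_subset_Ico_left (ha (Fin.succ_le_castSucc_iff.mpr hst)))
  intro s t hst
  rcases hst.lt_or_gt with h | h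
  exacts [key s t h, (key t s h).symm]

lemma iUnion_cell (ha : Monotone a) : ⋃ t, cell a t = Ico (a 0) (a (Fin.last m)) := by
  induction m with
  | zero => simp
  | succ m ih =>
    have hcell : ∀ t : Fin m, cell a t.castSucc = cell (a ∘ Fin.castSucc) t := fun t => by
      simp only [cell, Function.comp_apply, Fin.succ_castSucc]
    rw [iUnion_fin_add_one_eq_iUnion_castSucc, Function.comp_def, iUnion_congr hcell,
      ih (ha.comp Fin.strictMono_castSucc.monotone), cell, Fin.succ_last]
    exact Ico_union_Ico_eq_Ico (ha (Fin.zero_le _)) (ha (Fin.le_last _))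

lemma cell_subset_Icc (hpart : IsPartitionPts m a) (t : Fin m) : cell a t ⊆ Icc 0 1 := by
  obtain ⟨ha0, ha1, ha⟩ := hpart
  exact fun x hx =>
    ⟨ha0 ▸ (ha (Fin.zero_le _)).trans hx.1, ha1 ▸ hx.2.le.trans (ha (Fin.le_last _))⟩

lemma cakeval_eq_sum_cell (hpart : IsPartitionPts m a) {f : ℝ → ℝ} {G : Fin m → ℝ}
    (hG : ∀ t, ∀ x ∈ cell a t, f x = G t) {S : Set ℝ} (hS : MeasurableSet S)
    (hS1 : S ⊆ Icc 0 1) : cakeval f S = ∑ t, G t * volume.real (S ∩ cell a t) := by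
  obtain ⟨ha0, ha1, ha⟩ := hpart
  have hmeas : ∀ t, MeasurableSet (S ∩ cell a t) := fun t => hS.inter measurableSet_Ico
  have hS_ae : S =ᵐ[volume] ⋃ t, S ∩ cell a t := by
    rw [← inter_iUnion, iUnion_cell ha, ha0, ha1]
    nth_rewrite 1 [← inter_eq_left.mpr hS1]
    exact ae_eq_set_inter (ae_eq_refl S) Ico_ae_eq_Icc.symm
  have hint : ∀ t, IntegrableOn f (S ∩ cell a t) := fun t =>
    (integrableOn_const (volume_inter_cell_ne_top S t)).congr_fun
      (fun x hx => (hG t x hx.2).symm) (hmeas t)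
  have hdisj : Pairwise (Function.onFun Disjoint fun t => S ∩ cell a t) := fun s t hst =>
    (pairwise_disjoint_cell ha hst).mono inter_subset_right inter_subset_right
  rw [cakeval, setIntegral_congr_set hS_ae, integral_iUnion_fintype hmeas hdisj hint]
  refine Finset.sum_congr rfl fun t _ => ?_
  rw [setIntegral_congr_fun (hmeas t) (fun x hx => hG t x hx.2), setIntegral_const, smul_eq_mul,
    mul_comm]

lemma cakeval_Icc_eq_sum_cellLength (hpart : IsPartitionPts m a) {f : ℝ → ℝ} {G : Fin m → ℝ}
    (hG : ∀ t, ∀ x ∈ cell a t, f x = G t) :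
    cakeval f (Icc 0 1) = ∑ t, G t * cellLength a t := by
  rw [cakeval_eq_sum_cell hpart hG measurableSet_Icc subset_rfl]
  refine Finset.sum_congr rfl fun t _ => ?_
  rw [inter_eq_right.mpr (cell_subset_Icc hpart t), volume_real_cell hpart.2.2]

end Cells

section Allocations

variable {n m : ℕ} {a : Fin (m + 1) → ℝ}

lemma FinUnionIcc.measurableSet {S : Set ℝ} (h : FinUnionIcc S) : MeasurableSet S := by
  obtain ⟨k, a, b, rfl⟩ := h
  exact MeasurableSet.iUnion fun j => measurableSet_Icc

lemma IsAllocOn.feasibleShares {C : Set ℝ} {A : Fin n → Set ℝ} (hA : IsAllocOn C A)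
    (ha : Monotone a) : FeasibleShares (cellLength a) (cellShares a A) := by
  refine ⟨fun i t => measureReal_nonneg, fun t => ?_⟩
  have hdisj : Set.Pairwise (Finset.univ : Finset (Fin n))
      (Function.onFun (AEDisjoint volume) fun i => A i ∩ cell a t) := fun i _ j _ hij =>
    measure_mono_null (inter_subset_inter inter_subset_left inter_subset_left) (hA.2.2 hij)
  have hmeas : ∀ i ∈ Finset.univ, NullMeasurableSet (A i ∩ cell a t) :=
    fun i _ => ((hA.2.1 i).measurableSet.inter measurableSet_Ico).nullMeasurableSet
  calc ∑ i, cellShares a A i t = volume.real (⋃ i ∈ Finset.univ, A i ∩ cell a t) :=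
        (measureReal_biUnion_finset₀ hdisj hmeas fun i _ => volume_inter_cell_ne_top _ t).symm
    _ ≤ volume.real (cell a t) :=
        measureReal_mono (iUnion₂_subset fun i _ => inter_subset_right) (volume_cell_ne_top t)
    _ = cellLength a t := volume_real_cell ha t

lemma IsAllocOn.cakeval_eq_shareValue {f : Fin n → ℝ → ℝ} {G : Fin n → Fin m → ℝ}
    {A : Fin n → Set ℝ} (hA : IsAllocOn (Icc 0 1) A) (hpart : IsPartitionPts m a)
    (hG : ConstOnCells f a G) (i : Fin n) :
    cakeval (f i) (A i) = shareValue G (cellShares a A) i :=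
  cakeval_eq_sum_cell hpart (hG i) (hA.2.1 i).measurableSet (hA.1 i)

lemma exists_isAllocOn_cellShares_eq (ha : Monotone a) {z : Fin n → Fin m → ℝ}
    (hz : FeasibleShares (cellLength a) z) :
    ∃ Z : Fin n → Set ℝ, IsAllocOn (Icc (a 0) (a (Fin.last m))) Z ∧ cellShares a Z = z := by
  -- inside cell `t`, agents `0, 1, …` get consecutive intervals of lengths `z 0 t, z 1 t, …`
  let b : Fin m → Fin (n + 1) → ℝ := fun t k => a t.castSucc + Fin.partialSum (z · t) k
  have hb : ∀ t, Monotone (b t) := fun t => Fin.monotone_iff_le_succ.2 fun k => by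
    simp [b, Fin.partialSum_succ, hz.1 k t]
  have hb_len : ∀ i t, cellLength (b t) i = z i t := fun i t => by
    simp [cellLength, b, Fin.partialSum_succ]
  have hb_mem : ∀ t k, b t k ∈ Icc (a t.castSucc) (a t.succ) := by
    intro t k
    have hlast : b t (Fin.last n) ≤ a t.succ := by
      have := hz.2 t
      simp only [b, Fin.partialSum, Fin.val_last, List.take_of_length_le (List.length_ofFn).le,
        List.sum_ofFn, cellLength] at this ⊢
      linarith
    exact ⟨by simpa [b] using hb t (Fin.zero_le k), (hb t (Fin.le_last k)).trans hlast⟩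
  have hpiece : ∀ i t, cell (b t) i ⊆ cell a t := fun i t x hx =>
    ⟨(hb_mem t _).1.trans hx.1, hx.2.trans_le (hb_mem t _).2⟩
  let Z : Fin n → Set ℝ := fun i => ⋃ t, Icc (b t i.castSucc) (b t i.succ)
  let Z' : Fin n → Set ℝ := fun i => ⋃ t, cell (b t) i
  have hZ_ae : ∀ i, Z i =ᵐ[volume] Z' i := fun i =>
    Filter.EventuallyEq.countable_iUnion fun t => Ico_ae_eq_Icc.symm
  have hdisj : Pairwise (Function.onFun Disjoint Z') := by
    intro i j hij
    refine disjoint_iUnion_left.2 fun s => disjoint_iUnion_right.2 fun t => ?_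
    obtain rfl | hst := eq_or_ne s t
    · exact pairwise_disjoint_cell (hb s) hij
    · exact (pairwise_disjoint_cell ha hst).mono (hpiece i s) (hpiece j t)
  have hZ'_cell : ∀ i t, Z' i ∩ cell a t = cell (b t) i := by
    intro i t
    ext x
    simp only [Z', mem_inter_iff, mem_iUnion]
    constructor
    · rintro ⟨⟨s, hs⟩, hx⟩
      obtain rfl : s = t := by
        by_contra hst
        exact disjoint_left.mp (pairwise_disjoint_cell ha hst) (hpiece i s hs) hx
      exact hs
    · exact fun hx => ⟨⟨t, hx⟩, hpiece i t hx⟩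
  refine ⟨Z, ⟨fun i => iUnion_subset fun t => ?_, fun i => ⟨m, _, _, rfl⟩, fun i j hij => ?_⟩, ?_⟩
  · exact Icc_subset_Icc ((ha (Fin.zero_le _)).trans (hb_mem t _).1)
      ((hb_mem t _).2.trans (ha (Fin.le_last _)))
  · change volume (Z i ∩ Z j) = 0
    rw [measure_congr (ae_eq_set_inter (hZ_ae i) (hZ_ae j)), (hdisj hij).inter_eq, measure_empty]
  · funext i t
    rw [cellShares, measureReal_congr (ae_eq_set_inter (hZ_ae i) (ae_eq_refl (cell a t))),
      hZ'_cell, volume_real_cell (hb t), hb_len]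

end Allocations

section MNW

variable {n m : ℕ} {a : Fin (m + 1) → ℝ}

lemma ConstOnCells.leftEndpoint {f : Fin n → ℝ → ℝ} {F : Fin n → Fin m → ℝ}
    (hF : ConstOnCells f a F) : ConstOnCells f a fun i t => f i (a t.castSucc) :=
  fun i t x hx => (hF i t x hx).trans (hF i t _ ⟨le_rfl, hx.1.trans_lt hx.2⟩).symm

lemma ConstOnCells.weaklyMNWOn_iff {f : Fin (n + 1) → ℝ → ℝ}
    {F F' : Fin (n + 1) → Fin m → ℝ} (hF : ConstOnCells f a F) (hF' : ConstOnCells f a F')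
    {C : Set ℝ} {A : Fin (n + 1) → Set ℝ} :
    WeaklyMNWOn C f a F A ↔ WeaklyMNWOn C f a F' A := by
  have key : ∀ i t, 0 < volume (A i ∩ cell a t) → ∀ j, F j t = F' j t := fun i t h j => by
    obtain ⟨x, -, hx⟩ := nonempty_of_measure_ne_zero h.ne'
    rw [← hF j t x hx, hF' j t x hx]
  refine and_congr_right fun _ => and_congr_right fun _ =>
    forall₂_congr fun t i => forall_congr' fun h => ?_
  simp only [key i t h]

lemma IsAllocOn.weaklyMNWOn_iff {f : Fin (n + 1) → ℝ → ℝ} {G : Fin (n + 1) → Fin m → ℝ}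
    {A : Fin (n + 1) → Set ℝ} (hA : IsAllocOn (Icc 0 1) A) (hpart : IsPartitionPts m a)
    (hG : ConstOnCells f a G) :
    WeaklyMNWOn (Icc 0 1) f a G A ↔ (∀ i, 0 < shareValue G (cellShares a A) i) ∧
      SatisfiesMNWCondition G (cellShares a A) {0}ᶜ := by
  have hpos : ∀ i t, 0 < volume (A i ∩ cell a t) ↔ 0 < cellShares a A i t := fun i t => by
    rw [cellShares, measureReal_def, ENNReal.toReal_pos_iff]
    exact iff_self_and.mpr fun _ => (volume_inter_cell_ne_top _ t).lt_top
  simp only [WeaklyMNWOn, hA.cakeval_eq_shareValue hpart hG, hpos, true_and, hA]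
  refine and_congr_right fun hv => ?_
  simp only [SatisfiesMNWCondition, mem_compl_singleton_iff, div_le_div_iff₀ (hv _) (hv _)]
  exact forall_comm

lemma IsMNW.isNashOptimalShares {f : Fin n → ℝ → ℝ} {G : Fin n → Fin m → ℝ}
    {B : Fin n → Set ℝ} (hB : IsMNW f B) (hpart : IsPartitionPts m a)
    (hG : ConstOnCells f a G) : IsNashOptimalShares G (cellLength a) (cellShares a B) := by
  refine ⟨hB.1.feasibleShares hpart.2.2, fun z hz => ?_⟩
  obtain ⟨Z, hZ, rfl⟩ := exists_isAllocOn_cellShares_eq hpart.2.2 hz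
  rw [hpart.1, hpart.2.1] at hZ
  simpa only [nashProd, hZ.cakeval_eq_shareValue hpart hG, hB.1.cakeval_eq_shareValue hpart hG]
    using hB.2 Z hZ

end MNW

/-- Lemma 3.2: the maximum value agent 1 (index `0`) receives among all weakly MNW
allocations equals the value agent 1 receives in an MNW allocation: every weakly MNW
allocation gives agent 1 at most his MNW value, and every MNW allocation is itself
weakly MNW (so the bound is attained). -/
theorem weakly_mnw_value_eq_mnw_value (n m : ℕ) (f : Fin (n + 1) → ℝ → ℝ)
    (hf : ∀ i, ValidDensity (f i))
    (a : Fin (m + 1) → ℝ) (F : Fin (n + 1) → Fin m → ℝ)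
    (hpart : IsPartitionPts m a) (hconst : ConstOnCells f a F)
    (B : Fin (n + 1) → Set ℝ) (hB : IsMNW f B) :
    (∀ A : Fin (n + 1) → Set ℝ, WeaklyMNWOn (Set.Icc 0 1) f a F A →
        cakeval (f 0) (A 0) ≤ cakeval (f 0) (B 0)) ∧
      WeaklyMNWOn (Set.Icc 0 1) f a F B := by
  -- `F` is arbitrary on degenerate cells; `G` is the same data, but nonnegative everywhere
  let G : Fin (n + 1) → Fin m → ℝ := fun i t => f i (a t.castSucc)
  have hG : ConstOnCells f a G := hconst.leftEndpoint
  have hG0 : 0 ≤ G := fun i t => (hf i).2.1 _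
  simp only [hconst.weaklyMNWOn_iff hG]
  have hy := hB.isNashOptimalShares hpart hG
  have hw := hy.shareValue_pos hG0 (cellLength_nonneg hpart.2.2) fun i =>
    cakeval_Icc_eq_sum_cellLength hpart (hG i) ▸ (hf i).2.2
  refine ⟨fun A hA => ?_, (hB.1.weaklyMNWOn_iff hpart hG).2
    ⟨hw, (hy.satisfiesMNWCondition hG0 hw).mono (subset_univ _)⟩⟩
  rw [hA.1.cakeval_eq_shareValue hpart hG, hB.1.cakeval_eq_shareValue hpart hG]
  exact hy.shareValue_le hG0 hw (hA.1.feasibleShares hpart.2.2)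
    ((hA.1.weaklyMNWOn_iff hpart hG).1 hA).2
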